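/- Let P, Q ∈ ℤ with P·Q ≠ 0 and let p be a prime with p ∣ P and p ∣ Q. Set a = ν_p(P) and b = ν_p(Q), suppose b = 2a, and let r ≥ 1 be an integer. Write P = p^a·P' and Q = p^b·Q' with p ∤ P'·Q', let U' be the Lucas sequence with parameters (P',Q'), let ρ' be the least n ≥ 1 with p ∣ U'(n). Then S = L(P,Q,p^{−r}) is a numerical semigroup and either s(S) = ∅ or gcd s(S) ≥ 2; more precisely, if p ≥ 3 then ρ' (which is ≥ 2) divides every element of s(S), and if p = 2 then 3 divides every element of s(S). -/

import Mathlib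

/-!
Scaling the parameters gives `U(p^a P', p^{2a} Q')(n + 1) = p^{a n} U'(n + 1)`. Hence every
`n + 1` with `r ≤ a n` lies in `S = L(P, Q, p^{-r})`, so `S` has finite complement. If some
`n + 1 ∈ S` had `p ∤ U'(n + 1)`, then `r ≤ a n` and every integer `≥ n + 1` would lie in `S`,
so `n + 1` would exceed the Frobenius number. Thus every small element `n` has `p ∣ U'(n)`, and
since `p ∤ Q'` these `n` are multiples of the rank `ρ'`. For `p = 2`, `P'` and `Q'` are odd, so
`U'(2) = P'` is odd while `U'(3) = P'^2 - Q'` is even, and `ρ' = 3`.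
-/

/-- The Lucas sequence `U_n(P,Q)`: `U_0 = 0`, `U_1 = 1`,
`U_{n+2} = P·U_{n+1} − Q·U_n`. -/
def lucasU (P Q : ℤ) : ℕ → ℤ
  | 0 => 0
  | 1 => 1
  | n + 2 => P * lucasU P Q (n + 1) - Q * lucasU P Q n

/-- The Lucas semigroup `L(P,Q,R) = {n ∈ ℕ : U_n(P,Q)·R ∈ ℤ}`. -/
def lucasSG (P Q : ℤ) (R : ℚ) : Set ℕ :=
  {n : ℕ | ∃ k : ℤ, (lucasU P Q n : ℚ) * R = (k : ℚ)}

/-- The local Lucas semigroup `L(P,Q,p^{-r}) = {n ∈ ℕ : ν_p(U_n) ≥ r}`,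
equivalently the set of `n` with `U_n · p^{-r} ∈ ℤ`. -/
def localLucasSG (P Q : ℤ) (p : ℕ) (r : ℤ) : Set ℕ :=
  lucasSG P Q ((p : ℚ) ^ (-r))

/-- The Frobenius number of `S ⊆ ℕ`: the largest natural number not in `S`
(for a numerical semigroup, `Sᶜ` is finite and nonempty so `sSup` is it). -/
noncomputable def frobNum (S : Set ℕ) : ℕ := sSup Sᶜ

/-- The set of nonzero small elements `s(S) = {n ∈ S : 0 < n < g(S)}`. -/
def smallElems (S : Set ℕ) : Set ℕ := {n : ℕ | n ∈ S ∧ 0 < n ∧ n < frobNum S}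

section Lucas

variable (P Q : ℤ)

lemma lucasU_add_two (n : ℕ) :
    lucasU P Q (n + 2) = P * lucasU P Q (n + 1) - Q * lucasU P Q n := rfl

lemma lucasU_add (m : ℕ) : ∀ n : ℕ,
    lucasU P Q (m + n + 1) =
      lucasU P Q (m + 1) * lucasU P Q (n + 1) - Q * lucasU P Q m * lucasU P Q n
  | 0 => by simp [lucasU]
  | 1 => by simp [lucasU]; ring
  | n + 2 => by
    rw [show m + (n + 2) + 1 = m + n + 1 + 2 by omega, lucasU_add_two,
      show m + n + 1 + 1 = m + (n + 1) + 1 by omega, lucasU_add m (n + 1), lucasU_add m n,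
      lucasU_add_two P Q (n + 1), lucasU_add_two P Q n]
    ring

lemma dvd_lucasU_add {d : ℤ} {m n : ℕ} (hm : d ∣ lucasU P Q m) (hn : d ∣ lucasU P Q n) :
    d ∣ lucasU P Q (m + n) := by
  cases m with
  | zero => simpa using hn
  | succ m =>
    rw [show m + 1 + n = m + n + 1 by omega, lucasU_add]
    exact dvd_sub (hm.mul_right _) (hn.mul_left _)

lemma lucasU_mul_left (c : ℤ) : ∀ n : ℕ,
    lucasU (c * P) (c ^ 2 * Q) (n + 1) = c ^ n * lucasU P Q (n + 1)
  | 0 => by simp [lucasU]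
  | 1 => by simp [lucasU]
  | n + 2 => by
    rw [lucasU_add_two, lucasU_add_two P Q, lucasU_mul_left c (n + 1), lucasU_mul_left c n]
    ring

lemma lucasU_pow_mul (c : ℤ) (a n : ℕ) :
    lucasU (c ^ a * P) (c ^ (2 * a) * Q) (n + 1) = c ^ (a * n) * lucasU P Q (n + 1) := by
  rw [pow_mul', lucasU_mul_left, ← pow_mul]

variable {P Q} {p : ℤ} {ρ : ℕ}

lemma two_le_of_isLeast_dvd_lucasU (hp : ¬IsUnit p)
    (hρ : IsLeast {n : ℕ | 1 ≤ n ∧ p ∣ lucasU P Q n} ρ) : 2 ≤ ρ := by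
  obtain ⟨⟨hρ1, hdvd⟩, -⟩ := hρ
  by_contra! hlt
  obtain rfl : ρ = 1 := by omega
  exact hp (isUnit_of_dvd_one hdvd)

lemma dvd_lucasU_of_dvd_lucasU_add_rank (hp : Prime p) (hQ : ¬p ∣ Q)
    (hρ : IsLeast {n : ℕ | 1 ≤ n ∧ p ∣ lucasU P Q n} ρ) {m : ℕ}
    (h : p ∣ lucasU P Q (ρ + m)) : p ∣ lucasU P Q m := by
  have hρ2 := two_le_of_isLeast_dvd_lucasU hp.not_isUnit hρ
  obtain ⟨s, rfl⟩ : ∃ s, ρ = s + 1 := ⟨ρ - 1, by omega⟩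
  have hs : ¬p ∣ lucasU P Q s := fun hs => absurd (hρ.2 ⟨by omega, hs⟩) (by omega)
  rw [show s + 1 + m = s + m + 1 by omega, lucasU_add] at h
  have hQsm : p ∣ Q * lucasU P Q s * lucasU P Q m :=
    (dvd_sub_right (hρ.1.2.mul_right _)).mp h
  exact (hp.dvd_mul.mp hQsm).resolve_left fun hQs => (hp.dvd_mul.mp hQs).elim hQ hs

lemma rank_dvd_of_dvd_lucasU (hp : Prime p) (hQ : ¬p ∣ Q)
    (hρ : IsLeast {n : ℕ | 1 ≤ n ∧ p ∣ lucasU P Q n} ρ) {n : ℕ}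
    (hn : p ∣ lucasU P Q n) : ρ ∣ n := by
  have hreduce : ∀ q t, p ∣ lucasU P Q (ρ * q + t) → p ∣ lucasU P Q t := by
    intro q t
    induction q with
    | zero => simp
    | succ q ih =>
      intro h
      rw [show ρ * (q + 1) + t = ρ + (ρ * q + t) by ring] at h
      exact ih (dvd_lucasU_of_dvd_lucasU_add_rank hp hQ hρ h)
  have hρ0 : 0 < ρ := hρ.1.1
  have hmod : p ∣ lucasU P Q (n % ρ) := hreduce (n / ρ) _ (by rwa [Nat.div_add_mod])
  refine Nat.dvd_of_mod_eq_zero (by_contra fun hne => ?_)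
  exact (Nat.mod_lt n hρ0).not_ge (hρ.2 ⟨Nat.one_le_iff_ne_zero.mpr hne, hmod⟩)

lemma rank_eq_three_of_odd (hP : Odd P) (hQ : Odd Q)
    (hρ : IsLeast {n : ℕ | 1 ≤ n ∧ 2 ∣ lucasU P Q n} ρ) : ρ = 3 := by
  have hle : ρ ≤ 3 := hρ.2 ⟨by norm_num, by
    simpa [lucasU_add_two, lucasU, ← even_iff_two_dvd, sq] using (hP.mul hP).sub_odd hQ⟩
  have hne : ρ ≠ 2 := by
    rintro rfl
    exact Int.not_even_iff_odd.mpr hP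
      (even_iff_two_dvd.mpr (by simpa [lucasU_add_two, lucasU] using hρ.1.2))
  have := two_le_of_isLeast_dvd_lucasU Int.prime_two.not_isUnit hρ
  omega

end Lucas

lemma le_of_pow_dvd_pow_mul {p x : ℤ} (hp : Prime p) (hx : ¬p ∣ x) {r k : ℕ}
    (h : p ^ r ∣ p ^ k * x) : r ≤ k :=
  (pow_dvd_pow_iff hp.ne_zero hp.not_isUnit).mp
    ((((hp.coprime_iff_not_dvd).mpr hx).pow_left).dvd_of_dvd_mul_right h)

lemma frobNum_le {S : Set ℕ} {m : ℕ} (h : ∀ k, m < k → k ∈ S) : frobNum S ≤ m :=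
  csSup_le' fun k hk => not_lt.mp fun hmk => hk (h k hmk)

section LocalLucas

variable {P Q : ℤ} {p : ℕ} {r : ℕ}

lemma mem_localLucasSG_iff (hp : p ≠ 0) {n : ℕ} :
    n ∈ localLucasSG P Q p r ↔ (p : ℤ) ^ r ∣ lucasU P Q n := by
  have hpr : (p : ℚ) ^ r ≠ 0 := pow_ne_zero _ (Nat.cast_ne_zero.mpr hp)
  simp only [localLucasSG, lucasSG, Set.mem_ofPred_eq, zpow_neg, zpow_natCast,
    mul_inv_eq_iff_eq_mul₀ hpr, dvd_iff_exists_eq_mul_left]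
  exact exists_congr fun k => by norm_cast

variable {a : ℕ}

lemma add_one_mem_localLucasSG (hp : p ≠ 0) {n : ℕ} (h : r ≤ a * n) :
    n + 1 ∈ localLucasSG ((p : ℤ) ^ a * P) ((p : ℤ) ^ (2 * a) * Q) p r := by
  rw [mem_localLucasSG_iff hp, lucasU_pow_mul]
  exact (pow_dvd_pow _ h).mul_right _

lemma dvd_lucasU_of_mem_smallElems (hp : p.Prime) {n : ℕ}
    (hn : n ∈ smallElems (localLucasSG ((p : ℤ) ^ a * P) ((p : ℤ) ^ (2 * a) * Q) p r)) :
    (p : ℤ) ∣ lucasU P Q n := by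
  obtain ⟨hnS, hn0, hng⟩ := hn
  obtain ⟨m, rfl⟩ := Nat.exists_eq_add_one.mpr hn0
  by_contra hdvd
  rw [mem_localLucasSG_iff hp.ne_zero, lucasU_pow_mul] at hnS
  have hr : r ≤ a * m := le_of_pow_dvd_pow_mul (Nat.prime_iff_prime_int.mp hp) hdvd hnS
  have : frobNum (localLucasSG ((p : ℤ) ^ a * P) ((p : ℤ) ^ (2 * a) * Q) p r) ≤ m :=
    frobNum_le fun k hk => by
      obtain ⟨j, rfl⟩ := Nat.exists_eq_add_one.mpr (Nat.zero_lt_of_lt hk)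
      exact add_one_mem_localLucasSG hp.ne_zero
        (hr.trans (Nat.mul_le_mul_left a (Nat.lt_succ_iff.mp hk)))
  omega

end LocalLucas

theorem localLucasSG_special_case_b_eq_two_a_small_general (P Q P' Q' : ℤ)
    (p : ℕ) (hp : p.Prime) (a : ℕ) (ha : 1 ≤ a)
    (hP : P = (p : ℤ) ^ a * P') (hQ : Q = (p : ℤ) ^ (2 * a) * Q')
    (hreg : ¬ (p : ℤ) ∣ P' * Q') (ρ' : ℕ)
    (hρ : IsLeast {n : ℕ | 1 ≤ n ∧ (p : ℤ) ∣ lucasU P' Q' n} ρ')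
    (r : ℕ) :
    0 ∈ localLucasSG P Q p (r : ℤ) ∧
    (∀ m n : ℕ, m ∈ localLucasSG P Q p (r : ℤ) →
      n ∈ localLucasSG P Q p (r : ℤ) → m + n ∈ localLucasSG P Q p (r : ℤ)) ∧
    (localLucasSG P Q p (r : ℤ))ᶜ.Finite ∧
    2 ≤ ρ' ∧
    (3 ≤ p → ∀ n ∈ smallElems (localLucasSG P Q p (r : ℤ)), ρ' ∣ n) ∧
    (p = 2 → ∀ n ∈ smallElems (localLucasSG P Q p (r : ℤ)), 3 ∣ n) := by
  subst hP hQ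
  have hpZ : Prime (p : ℤ) := Nat.prime_iff_prime_int.mp hp
  have hsmall : ∀ n ∈ smallElems (localLucasSG (p ^ a * P') (p ^ (2 * a) * Q') p r), ρ' ∣ n :=
    fun n hn =>
      rank_dvd_of_dvd_lucasU hpZ (fun h => hreg (h.mul_left P')) hρ
        (dvd_lucasU_of_mem_smallElems hp hn)
  simp only [mem_localLucasSG_iff hp.ne_zero]
  refine ⟨dvd_zero _, fun m n => dvd_lucasU_add _ _, ?_,
    two_le_of_isLeast_dvd_lucasU hpZ.not_isUnit hρ, fun _ => hsmall, fun hp2 n hn => ?_⟩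
  · refine (Set.finite_Iic r).subset fun n hn => Set.mem_Iic.mpr (not_lt.mp fun hrn => hn ?_)
    obtain ⟨m, rfl⟩ := Nat.exists_eq_add_one.mpr (Nat.zero_lt_of_lt hrn)
    exact add_one_mem_localLucasSG hp.ne_zero
      ((Nat.lt_succ_iff.mp hrn).trans (Nat.le_mul_of_pos_left m ha))
  · subst hp2
    obtain ⟨hP', hQ'⟩ :=
      Int.odd_mul.mp (Int.not_even_iff_odd.mp (by simpa [even_iff_two_dvd] using hreg))
    exact rank_eq_three_of_odd hP' hQ' (by simpa using hρ) ▸ hsmall n hn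

/-- Special prime, case `b = 2a`: `S = L(P,Q,p^{-r})` is a numerical semigroup
and `s(S) = ∅` or `gcd s(S) ≥ 2`; more precisely, if `p ≥ 3` then `ρ'` (which
is `≥ 2`) divides every nonzero small element of `S`, and if `p = 2` then `3`
divides every nonzero small element of `S`. -/
theorem localLucasSG_special_case_b_eq_two_a_small (P Q P' Q' : ℤ)
    (hPQ : P * Q ≠ 0) (p : ℕ) (hp : p.Prime) (a : ℕ) (ha : 1 ≤ a)
    (hP : P = (p : ℤ) ^ a * P') (hQ : Q = (p : ℤ) ^ (2 * a) * Q')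
    (hreg : ¬ (p : ℤ) ∣ P' * Q') (ρ' : ℕ)
    (hρ : IsLeast {n : ℕ | 1 ≤ n ∧ (p : ℤ) ∣ lucasU P' Q' n} ρ')
    (r : ℕ) (hr : 1 ≤ r) :
    0 ∈ localLucasSG P Q p (r : ℤ) ∧
    (∀ m n : ℕ, m ∈ localLucasSG P Q p (r : ℤ) →
      n ∈ localLucasSG P Q p (r : ℤ) → m + n ∈ localLucasSG P Q p (r : ℤ)) ∧
    (localLucasSG P Q p (r : ℤ))ᶜ.Finite ∧
    2 ≤ ρ' ∧
    (3 ≤ p → ∀ n ∈ smallElems (localLucasSG P Q p (r : ℤ)), ρ' ∣ n) ∧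
    (p = 2 → ∀ n ∈ smallElems (localLucasSG P Q p (r : ℤ)), 3 ∣ n) :=
  localLucasSG_special_case_b_eq_two_a_small_general P Q P' Q' p hp a ha hP hQ hreg ρ' hρ r
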